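/- For every p ∈ [2, ∞) there exists a constant C > 0 such that for every continuous function M : ℝ → ℝ and every u ∈ C_c^∞(ℝ, ℂ) one has the magnetic Gagliardo–Nirenberg inequality ∫_ℝ |u(x)|^p dx ≤ C · (∫_ℝ |i u′(x) + M(x) u(x)|² dx)^{(p−2)/4} · (∫_ℝ |u(x)|² dx)^{(p+2)/4}. In particular the constant C can be chosen independently of the magnetic potential M. -/

import Mathlib

/-!
Since `M` is real, `2 Re(ū u') = 2 Im(ū (i u' + M u))`, so the derivative of `|u|²` is bounded by
`2 |u| |i u' + M u|` whatever `M` is. Integrating from `-∞` and applying Cauchy–Schwarz gives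
`‖u‖²_∞ ≤ 2 ‖u‖₂ ‖i u' + M u‖₂`, and then `∫ |u|ᵖ ≤ ‖u‖_∞^(p-2) ∫ |u|²`.
-/

open MeasureTheory

noncomputable def magneticMomentum (M : ℝ → ℝ) (u : ℝ → ℂ) (x : ℝ) : ℂ :=
  Complex.I * deriv u x + (M x : ℂ) * u x

theorem HasCompactSupport.le_integral_of_deriv_le {f g : ℝ → ℝ} (hf : ContDiff ℝ 1 f)
    (h2f : HasCompactSupport f) (hg : Integrable g) (hg0 : ∀ x, 0 ≤ g x)
    (hfg : ∀ x, deriv f x ≤ g x) (b : ℝ) : f b ≤ ∫ x, g x := by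
  have hf' : Integrable (deriv f) :=
    (hf.continuous_deriv le_rfl).integrable_of_hasCompactSupport h2f.deriv
  calc f b = ∫ x in Set.Iic b, deriv f x := (h2f.integral_Iic_deriv_eq hf b).symm
    _ ≤ ∫ x in Set.Iic b, g x := setIntegral_mono hf'.integrableOn hg.integrableOn hfg
    _ ≤ ∫ x, g x := setIntegral_le_integral hg (Filter.Eventually.of_forall hg0)

theorem Complex.inner_le_norm_mul_norm_I_mul_add_ofReal_mul (z w : ℂ) (m : ℝ) :
    inner ℝ z w ≤ ‖z‖ * ‖I * w + m * z‖ := by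
  -- multiplication by `I` is an isometry, and `m * z` is orthogonal to `I * z`
  calc inner ℝ z w = inner ℝ (I * z) (I * w + m * z) := by
        simp [Complex.inner, Complex.mul_re, Complex.mul_im]; ring
    _ ≤ ‖I * z‖ * ‖I * w + m * z‖ := real_inner_le_norm _ _
    _ = ‖z‖ * ‖I * w + m * z‖ := by rw [norm_mul, Complex.norm_I, one_mul]

theorem integral_norm_mul_norm_le_sqrt_mul_sqrt {α E : Type*} [MeasurableSpace α] {μ : Measure α}
    [NormedAddCommGroup E] {f g : α → E} (hf : MemLp f 2 μ) (hg : MemLp g 2 μ) :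
    ∫ a, ‖f a‖ * ‖g a‖ ∂μ ≤ √(∫ a, ‖f a‖ ^ 2 ∂μ) * √(∫ a, ‖g a‖ ^ 2 ∂μ) := by
  have h := integral_mul_norm_le_Lp_mul_Lq Real.HolderConjugate.two_two
    (by simpa using hf) (by simpa using hg)
  simpa only [Real.rpow_two, Real.sqrt_eq_rpow] using h

theorem Real.rpow_le_mul_sq_of_sq_le {a B p : ℝ} (ha : 0 ≤ a) (haB : a ^ 2 ≤ B) (hp : 2 ≤ p) :
    a ^ p ≤ B ^ ((p - 2) / 2) * a ^ 2 := by
  have h : a ^ p = (a ^ 2) ^ ((p - 2) / 2) * a ^ 2 := by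
    rw [← Real.rpow_natCast, ← Real.rpow_mul ha, ← Real.rpow_add' ha (by linarith)]
    congr 1
    ring
  rw [h]
  gcongr

theorem integral_norm_rpow_le_of_sq_norm_le {α E : Type*} [MeasurableSpace α] {μ : Measure α}
    [NormedAddCommGroup E] {f : α → E} {B p : ℝ} (hf : Integrable (fun x => ‖f x‖ ^ 2) μ)
    (hB : ∀ x, ‖f x‖ ^ 2 ≤ B) (hp : 2 ≤ p) :
    ∫ x, ‖f x‖ ^ p ∂μ ≤ B ^ ((p - 2) / 2) * ∫ x, ‖f x‖ ^ 2 ∂μ := by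
  rw [← integral_const_mul]
  exact integral_mono_of_nonneg (Filter.Eventually.of_forall fun x => by positivity)
    (hf.const_mul _) (Filter.Eventually.of_forall fun x =>
      Real.rpow_le_mul_sq_of_sq_le (norm_nonneg _) (hB x) hp)

theorem continuous_magneticMomentum {M : ℝ → ℝ} {u : ℝ → ℂ} (hM : Continuous M)
    (hu : ContDiff ℝ 1 u) : Continuous (magneticMomentum M u) :=
  (continuous_const.mul (hu.continuous_deriv le_rfl)).add
    ((Complex.continuous_ofReal.comp hM).mul hu.continuous)

theorem HasCompactSupport.magneticMomentum {u : ℝ → ℂ} (hu : HasCompactSupport u) (M : ℝ → ℝ) :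
    HasCompactSupport (magneticMomentum M u) :=
  hu.deriv.mul_left.add hu.mul_left

theorem sq_norm_le_two_mul_integral_norm_mul_norm_magneticMomentum {M : ℝ → ℝ} {u : ℝ → ℂ}
    (hM : Continuous M) (hu : ContDiff ℝ 1 u) (hsupp : HasCompactSupport u) (x : ℝ) :
    ‖u x‖ ^ 2 ≤ 2 * ∫ t, ‖u t‖ * ‖magneticMomentum M u t‖ := by
  have hint : Integrable (fun t => ‖u t‖ * ‖magneticMomentum M u t‖) :=
    Continuous.integrable_of_hasCompactSupport
      (hu.continuous.norm.mul (continuous_magneticMomentum hM hu).norm) hsupp.norm.mul_right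
  have hsupp2 : HasCompactSupport (fun t => ‖u t‖ ^ 2) :=
    hsupp.comp_left (g := fun z : ℂ => ‖z‖ ^ 2) (by simp)
  rw [← integral_const_mul]
  refine hsupp2.le_integral_of_deriv_le (hu.norm_sq ℝ) (hint.const_mul 2)
    (fun t => by positivity) (fun t => ?_) x
  rw [((hu.differentiable one_ne_zero t).hasDerivAt.norm_sq).deriv]
  gcongr
  exact Complex.inner_le_norm_mul_norm_I_mul_add_ofReal_mul _ _ _

theorem two_mul_sqrt_mul_sqrt_rpow_mul_eq {a b p : ℝ} (ha : 0 ≤ a) (hb : 0 ≤ b) (hp : 2 ≤ p) :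
    (2 * √b * √a) ^ ((p - 2) / 2) * a =
      2 ^ ((p - 2) / 2) * b ^ ((p - 2) / 4) * a ^ ((p + 2) / 4) := by
  have hsqrt : ∀ c : ℝ, 0 ≤ c → √c ^ ((p - 2) / 2) = c ^ ((p - 2) / 4) := fun c hc => by
    rw [Real.sqrt_eq_rpow, ← Real.rpow_mul hc]; ring_nf
  have hadd : (p + 2) / 4 = (p - 2) / 4 + 1 := by ring
  rw [Real.mul_rpow (by positivity) (Real.sqrt_nonneg _),
    Real.mul_rpow zero_le_two (Real.sqrt_nonneg _), hsqrt a ha, hsqrt b hb, hadd,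
    Real.rpow_add_one' ha (by linarith)]
  ring

theorem statement6 (p : ℝ) (hp : 2 ≤ p) :
    ∃ C : ℝ, 0 < C ∧ ∀ M : ℝ → ℝ, Continuous M →
      ∀ u : ℝ → ℂ, ContDiff ℝ (⊤ : ℕ∞) u → HasCompactSupport u →
        (∫ x : ℝ, ‖u x‖ ^ p) ≤
          C * (∫ x : ℝ, ‖Complex.I * deriv u x + (M x : ℂ) * u x‖ ^ 2) ^ ((p - 2) / 4) *
            (∫ x : ℝ, ‖u x‖ ^ 2) ^ ((p + 2) / 4) := by
  refine ⟨2 ^ ((p - 2) / 2), by positivity, fun M hM u hu hsupp => ?_⟩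
  have hu1 : ContDiff ℝ 1 u := hu.of_le (by exact_mod_cast le_top)
  have hu2 : MemLp u 2 := hu1.continuous.memLp_of_hasCompactSupport hsupp
  have hDu2 : MemLp (magneticMomentum M u) 2 :=
    (continuous_magneticMomentum hM hu1).memLp_of_hasCompactSupport (hsupp.magneticMomentum M)
  have hsup : ∀ x, ‖u x‖ ^ 2 ≤
      2 * √(∫ t, ‖magneticMomentum M u t‖ ^ 2) * √(∫ t, ‖u t‖ ^ 2) := fun x => by
    have := integral_norm_mul_norm_le_sqrt_mul_sqrt hu2 hDu2
    linarith [sq_norm_le_two_mul_integral_norm_mul_norm_magneticMomentum hM hu1 hsupp x]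
  calc (∫ x, ‖u x‖ ^ p)
      ≤ (2 * √(∫ t, ‖magneticMomentum M u t‖ ^ 2) * √(∫ t, ‖u t‖ ^ 2)) ^ ((p - 2) / 2) *
          ∫ x, ‖u x‖ ^ 2 :=
        integral_norm_rpow_le_of_sq_norm_le (hu2.integrable_norm_pow two_ne_zero) hsup hp
    _ = _ := two_mul_sqrt_mul_sqrt_rpow_mul_eq (integral_nonneg fun _ => by positivity)
        (integral_nonneg fun _ => by positivity) hp
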